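/- arXiv:1805.07502 — 5 statements merged into one kernel-verified Lean document; each statement's English description precedes it below -/
import Mathlib

section
/- Let σ : ℝ → ℝ be a bounded, Borel-measurable sigmoidal function and let μ be a finite signed Borel measure on ℝ^d such that ∫_{ℝ^d} σ(wᵀx + θ) dμ(x) = 0 for all w ∈ ℝ^d and θ ∈ ℝ. Then for every w ∈ ℝ^d, w₀ ∈ ℝ and φ ∈ ℝ, one has σ(φ)·μ({x ∈ ℝ^d : wᵀx + w₀ = 0}) + μ({x ∈ ℝ^d : wᵀx + w₀ > 0}) = 0. -/
open MeasureTheory Filter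

/-- The integral of a function against a finite signed measure, defined via its
Jordan decomposition. -/
noncomputable def signedIntegral {α : Type*} [MeasurableSpace α]
    (μ : SignedMeasure α) (f : α → ℝ) : ℝ :=
  (∫ x, f x ∂μ.toJordanDecomposition.posPart) -
    (∫ x, f x ∂μ.toJordanDecomposition.negPart)

/-!
The ridge functions `x ↦ σ (n * (wᵀx + w₀) + φ)` all integrate to zero against `μ`. As `n → ∞`
they converge pointwise to `1` on the open half-space, to `σ φ` on the hyperplane and to `0`
elsewhere, and they are uniformly bounded, so dominated convergence on both parts of the Jordan
decomposition of `μ` shows that the limit `μ(H) + σ(φ) μ(Π)` vanishes too.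
-/

open Set Topology

section SignedIntegral

variable {α : Type*} [MeasurableSpace α] (μ : SignedMeasure α)

theorem integrable_posPart_of_integrable_totalVariation {f : α → ℝ}
    (hf : Integrable f μ.totalVariation) : Integrable f μ.toJordanDecomposition.posPart :=
  hf.mono_measure (Measure.le_add_right le_rfl)

theorem integrable_negPart_of_integrable_totalVariation {f : α → ℝ}
    (hf : Integrable f μ.totalVariation) : Integrable f μ.toJordanDecomposition.negPart :=
  hf.mono_measure (Measure.le_add_left le_rfl)

theorem signedIntegral_add {f g : α → ℝ} (hf : Integrable f μ.totalVariation)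
    (hg : Integrable g μ.totalVariation) :
    signedIntegral μ (fun x => f x + g x) = signedIntegral μ f + signedIntegral μ g := by
  rw [signedIntegral, signedIntegral, signedIntegral,
    integral_add (integrable_posPart_of_integrable_totalVariation μ hf)
      (integrable_posPart_of_integrable_totalVariation μ hg),
    integral_add (integrable_negPart_of_integrable_totalVariation μ hf)
      (integrable_negPart_of_integrable_totalVariation μ hg)]
  ring

theorem signedIntegral_indicator_const {s : Set α} (hs : MeasurableSet s) (c : ℝ) :
    signedIntegral μ (s.indicator fun _ => c) = c * μ s := by
  rw [signedIntegral, integral_indicator_const c hs, integral_indicator_const c hs,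
    μ.apply_eq_posPart_real_sub_negPart_real hs, smul_eq_mul, smul_eq_mul]
  ring

theorem tendsto_signedIntegral_of_dominated {ι : Type*} {l : Filter ι} [l.IsCountablyGenerated]
    {F : ι → α → ℝ} {f : α → ℝ} {B : ℝ} (hF_meas : ∀ i, Measurable (F i))
    (h_bound : ∀ i a, |F i a| ≤ B) (h_lim : ∀ a, Tendsto (F · a) l (𝓝 (f a))) :
    Tendsto (fun i => signedIntegral μ (F i)) l (𝓝 (signedIntegral μ f)) := by
  have h_dom : ∀ (ν : Measure α) [IsFiniteMeasure ν],
      Tendsto (fun i => ∫ a, F i a ∂ν) l (𝓝 (∫ a, f a ∂ν)) := fun ν _ =>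
    tendsto_integral_filter_of_dominated_convergence (fun _ => B)
      (.of_forall fun i => (hF_meas i).aestronglyMeasurable)
      (.of_forall fun i => .of_forall (h_bound i)) (integrable_const B) (.of_forall h_lim)
  exact (h_dom _).sub (h_dom _)

end SignedIntegral

theorem tendsto_natCast_mul_add_of_sigmoidal {σ : ℝ → ℝ} (h₁ : Tendsto σ atTop (𝓝 1))
    (h₀ : Tendsto σ atBot (𝓝 0)) (t φ : ℝ) :
    Tendsto (fun n : ℕ => σ (n * t + φ)) atTop
      (𝓝 ((Ioi 0).indicator (fun _ => 1) t + ({0} : Set ℝ).indicator (fun _ => σ φ) t)) := by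
  rcases lt_trichotomy t 0 with ht | rfl | ht
  · have h_lin : Tendsto (fun n : ℕ => n * t + φ) atTop atBot :=
      tendsto_atBot_add_const_right _ _ (tendsto_natCast_atTop_atTop.atTop_mul_const_of_neg ht)
    simpa [ht.not_gt, ht.ne, Function.comp_def] using h₀.comp h_lin
  · simp
  · have h_lin : Tendsto (fun n : ℕ => n * t + φ) atTop atTop :=
      tendsto_atTop_add_const_right _ _ (tendsto_natCast_atTop_atTop.atTop_mul_const ht)
    simpa [ht, ht.ne', Function.comp_def] using h₁.comp h_lin

/-- If `σ` is a bounded measurable sigmoidal function and `μ` is a finite signed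
Borel measure on `ℝ^d` such that `∫ σ(wᵀx + θ) dμ(x) = 0` for all `w, θ`, then for
every `w ∈ ℝ^d`, `w₀ ∈ ℝ` and `φ ∈ ℝ`,
`σ(φ) · μ(Π_{w,w₀}) + μ(H_{w,w₀}) = 0`, where `Π_{w,w₀}` is the hyperplane
`{x : wᵀx + w₀ = 0}` and `H_{w,w₀}` the open half-space `{x : wᵀx + w₀ > 0}`. -/
theorem sigmoidal_measure_hyperplane_halfspace
    (σ : ℝ → ℝ)
    (hbdd : ∃ B : ℝ, ∀ t : ℝ, |σ t| ≤ B)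
    (hmeas : Measurable σ)
    (hsig : Tendsto σ atTop (nhds 1) ∧ Tendsto σ atBot (nhds 0))
    (d : ℕ)
    (μ : SignedMeasure (Fin d → ℝ))
    (h : ∀ (w : Fin d → ℝ) (θ : ℝ),
      signedIntegral μ (fun x => σ ((∑ j, w j * x j) + θ)) = 0) :
    ∀ (w : Fin d → ℝ) (w₀ φ : ℝ),
      σ φ * μ {x : Fin d → ℝ | (∑ j, w j * x j) + w₀ = 0} +
        μ {x : Fin d → ℝ | (∑ j, w j * x j) + w₀ > 0} = 0 := by
  intro w w₀ φ
  obtain ⟨B, hB⟩ := hbdd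
  set g : (Fin d → ℝ) → ℝ := fun x => (∑ j, w j * x j) + w₀
  have hg : Measurable g := by fun_prop
  have h_scaled : ∀ n : ℕ, signedIntegral μ (fun x => σ (n * g x + φ)) = 0 := by
    intro n
    convert h ((n : ℝ) • w) (n * w₀ + φ) using 4 with x
    simp only [g, Pi.smul_apply, smul_eq_mul, mul_add, Finset.mul_sum, mul_assoc]
    ring
  have h_lim := tendsto_signedIntegral_of_dominated μ (F := fun (n : ℕ) x => σ (n * g x + φ))
    (fun n => hmeas.comp (by fun_prop)) (fun n x => hB _)
    (fun x => tendsto_natCast_mul_add_of_sigmoidal hsig.1 hsig.2 (g x) φ)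
  simp only [h_scaled, ← indicator_comp_right, Function.comp_def] at h_lim
  have hH : MeasurableSet (g ⁻¹' Ioi 0) := hg measurableSet_Ioi
  have hP : MeasurableSet (g ⁻¹' {0}) := hg (measurableSet_singleton 0)
  rw [signedIntegral_add μ ((integrable_const _).indicator hH) ((integrable_const _).indicator hP),
    signedIntegral_indicator_const μ hH, signedIntegral_indicator_const μ hP] at h_lim
  change σ φ * μ (g ⁻¹' {0}) + μ (g ⁻¹' Ioi 0) = 0
  linarith [tendsto_nhds_unique tendsto_const_nhds h_lim]
end

section
/- For every d ≥ 1 and every x ∈ ℝ^d, Σ_{S ⊆ {1,…,d}} (−1)^{|S|} · (Σ_{j=1}^d s_j(S)·x_j)^d = 2^d · d! · Π_{j=1}^d x_j, where the sum ranges over all 2^d subsets S of {1,…,d}. -/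
/-!
Expanding the `d`-th power turns each summand into a sum over words `p : Fin d → Fin d` of
`∏ i, s_{p i}(S) x_{p i}`. For a fixed word, the sum over `S` of `(-1)^|S| ∏ i, s_{p i}(S)`
factorises over the coordinates `j`: coordinate `j` contributes `1 + (-1)^(c_j + 1)`, where `c_j`
is the number of letters of `p` equal to `j`. This vanishes as soon as some `c_j = 0`, so only
the `d!` bijective words survive, each contributing `2^d ∏ j, x_j`.
-/

open Finset Function

section

variable {ι α R : Type*} [DecidableEq ι] [CommRing R]

def subsetSign (S : Finset ι) (j : ι) : R := if j ∈ S then -1 else 1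

lemma subsetSign_pow (S : Finset ι) (j : ι) (m : ℕ) :
    (subsetSign S j : R) ^ m = if j ∈ S then (-1) ^ m else 1 := by
  unfold subsetSign; split_ifs <;> simp

variable [Fintype ι] [Fintype α]

lemma prod_subsetSign (S : Finset ι) : ∏ j, (subsetSign S j : R) = (-1) ^ #S := by
  simp [subsetSign]

lemma prod_subsetSign_comp (S : Finset ι) (f : α → ι) :
    ∏ a, (subsetSign S (f a) : R) = ∏ j, subsetSign S j ^ #{a | f a = j} := by
  simp_rw [← Finset.prod_fiberwise' univ f, prod_const]

lemma sum_prod_ite_mem_one (g : ι → R) :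
    ∑ S : Finset ι, ∏ j, (if j ∈ S then g j else 1) = ∏ j, (g j + 1) := by
  simp [Fintype.prod_add]

lemma sum_neg_one_pow_card_mul_prod_subsetSign_comp (f : α → ι) :
    ∑ S : Finset ι, (-1) ^ #S * ∏ a, (subsetSign S (f a) : R)
      = ∏ j, ((-1) ^ (#{a | f a = j} + 1) + 1) := by
  have h (S : Finset ι) : (-1) ^ #S * ∏ a, (subsetSign S (f a) : R)
      = ∏ j, (if j ∈ S then (-1) ^ (#{a | f a = j} + 1) else 1) := by
    simp_rw [← prod_subsetSign, prod_subsetSign_comp, ← prod_mul_distrib, ← pow_succ',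
      subsetSign_pow]
  simp_rw [h, sum_prod_ite_mem_one]

lemma sum_neg_one_pow_card_mul_prod_subsetSign_comp_of_card_eq {f : α → ι}
    (hcard : Fintype.card α = Fintype.card ι) :
    ∑ S : Finset ι, (-1) ^ #S * ∏ a, (subsetSign S (f a) : R)
      = if Bijective f then 2 ^ Fintype.card ι else 0 := by
  rw [sum_neg_one_pow_card_mul_prod_subsetSign_comp]
  split_ifs with hf
  · have hfiber (j : ι) : #{a | f a = j} = 1 := by
      obtain ⟨a, rfl⟩ := hf.surjective j
      rw [card_eq_one]
      exact ⟨a, by ext; simp [hf.injective.eq_iff]⟩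
    norm_num [hfiber]
  · have hf' : ¬ Surjective f := fun hs =>
      hf ((Fintype.bijective_iff_surjective_and_card f).2 ⟨hs, hcard⟩)
    obtain ⟨j, hj⟩ := not_forall.mp hf'
    refine prod_eq_zero (mem_univ j) ?_
    rw [card_eq_zero.2 (filter_eq_empty_iff.2 fun a _ h => hj ⟨a, h⟩)]
    norm_num

lemma card_bijective_eq_factorial [DecidableEq α] (hcard : Fintype.card α = Fintype.card ι) :
    #{f : α → ι | Bijective f} = (Fintype.card ι).factorial := by
  rw [← Fintype.card_subtype, Fintype.card_congr Equiv.bijectiveEquiv,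
    Fintype.card_equiv (Fintype.equivOfCardEq hcard), hcard]

lemma sum_neg_one_pow_card_mul_sum_subsetSign_pow_card (x : ι → R) :
    ∑ S : Finset ι, (-1) ^ #S * (∑ j, subsetSign S j * x j) ^ Fintype.card ι
      = 2 ^ Fintype.card ι * (Fintype.card ι).factorial * ∏ j, x j := by
  set n := Fintype.card ι
  have hexpand (S : Finset ι) : (-1) ^ #S * (∑ j, subsetSign S j * x j) ^ n
      = ∑ p : Fin n → ι, ((-1) ^ #S * ∏ i, subsetSign S (p i)) * ∏ i, x (p i) := by
    simp_rw [Fintype.sum_pow, mul_sum, prod_mul_distrib, mul_assoc]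
  have hsum (p : Fin n → ι) :
      ∑ S : Finset ι, ((-1) ^ #S * ∏ i, (subsetSign S (p i) : R)) * ∏ i, x (p i)
        = if Bijective p then 2 ^ n * ∏ j, x j else 0 := by
    rw [← sum_mul, sum_neg_one_pow_card_mul_prod_subsetSign_comp_of_card_eq (Fintype.card_fin n)]
    split_ifs with hp
    · rw [hp.prod_comp]
    · rw [zero_mul]
  simp_rw [hexpand]
  rw [sum_comm]
  simp_rw [hsum]
  rw [← sum_filter, sum_const, card_bijective_eq_factorial (Fintype.card_fin n), nsmul_eq_mul]
  ring

end

theorem alternating_subset_sum_pow_eq_prod_general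
    (d : ℕ) (x : Fin d → ℝ) :
    ∑ S : Finset (Fin d),
      (-1 : ℝ) ^ S.card * (∑ j, (if j ∈ S then (-1 : ℝ) else 1) * x j) ^ d
      = 2 ^ d * (d.factorial : ℝ) * ∏ j, x j := by
  have h := sum_neg_one_pow_card_mul_sum_subsetSign_pow_card x
  rw [Fintype.card_fin] at h
  exact h

/-- For `d ≥ 1` and `x ∈ ℝ^d`,
`Σ_{S ⊆ {1,…,d}} (−1)^{|S|} · (Σ_j s_j(S)·x_j)^d = 2^d · d! · Π_j x_j`, where
`s_j(S) = −1` if `j ∈ S` and `+1` otherwise. -/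
theorem alternating_subset_sum_pow_eq_prod
    (d : ℕ) (hd : 1 ≤ d) (x : Fin d → ℝ) :
    ∑ S : Finset (Fin d),
      (-1 : ℝ) ^ S.card * (∑ j, (if j ∈ S then (-1 : ℝ) else 1) * x j) ^ d
      = 2 ^ d * (d.factorial : ℝ) * ∏ j, x j :=
  alternating_subset_sum_pow_eq_prod_general d x
end

section
/- For every d ≥ 1 there exist n = 2^d real weights v¹, …, vⁿ and vectors w¹, …, wⁿ ∈ ℝ^d such that, as an identity of functions on ℝ^d (equivalently, of polynomials in x₁, …, x_d): Σ_{i=1}^n vⁱ · ((wⁱ)ᵀx)^d = Π_{j=1}^d x_j, and Σ_{i=1}^n vⁱ · ((wⁱ)ᵀx)^k = 0 for every natural number k with k < d. -/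
/-!
Polarization. Sum `(∏ j, ε j) * (∑ j, ε j * x j) ^ k` over all sign vectors `ε ∈ {±1}^d` and
expand the power as a sum over maps `f : Fin k → Fin d`. For each `f` the sign sum factors as
`∏ j, (1 + (-1) ^ (|f⁻¹ j| + 1))`, which vanishes as soon as some `j` is missed by `f`. For
`k < d` every `f` misses some `j`; for `k = d` exactly the `d!` bijections survive, each
contributing `2 ^ d * ∏ j, x j`. Dividing the weights by `2 ^ d * d!` gives the ensemble.
-/

open Finset

section SignedPowerSums

variable {ι R : Type*} [Fintype ι] [DecidableEq ι] [CommRing R]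

lemma prod_comp_eq_prod_pow_card_fiber {α M : Type*} [Fintype α] [CommMonoid M]
    (f : α → ι) (y : ι → M) : ∏ a, y (f a) = ∏ j, y j ^ #{a | f a = j} := by
  rw [prod_comp, prod_subset (subset_univ _)]
  intro j _ hj
  have hfiber : #{a | f a = j} = 0 := by
    rw [card_eq_zero, filter_eq_empty_iff]
    rintro a - rfl
    exact hj (mem_image_of_mem f (mem_univ a))
  rw [hfiber, pow_zero]

lemma sum_signs_prod_pow (n : ι → ℕ) :
    ∑ ε : ι → ℤˣ, ∏ j, ((ε j : ℤ) : R) ^ n j = ∏ j, (1 + (-1) ^ n j) := by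
  rw [← Fintype.prod_sum fun j (u : ℤˣ) => ((u : ℤ) : R) ^ n j]
  simp

lemma sum_signs_mul_sum_pow (x : ι → R) (k : ℕ) :
    ∑ ε : ι → ℤˣ, (∏ j, ((ε j : ℤ) : R)) * (∑ j, (ε j : ℤ) * x j) ^ k =
      ∑ f : Fin k → ι, (∏ t, x (f t)) * ∏ j, (1 + (-1) ^ (#{t | f t = j} + 1)) := by
  have hterm : ∀ (ε : ι → ℤˣ) (f : Fin k → ι),
      (∏ j, ((ε j : ℤ) : R)) * ∏ t, ((ε (f t) : ℤ) : R) * x (f t) =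
        (∏ t, x (f t)) * ∏ j, ((ε j : ℤ) : R) ^ (#{t | f t = j} + 1) := by
    intro ε f
    simp_rw [pow_succ', prod_mul_distrib,
      prod_comp_eq_prod_pow_card_fiber f fun j => ((ε j : ℤ) : R)]
    ring
  simp_rw [Fintype.sum_pow, mul_sum, hterm]
  rw [sum_comm]
  simp_rw [← mul_sum, sum_signs_prod_pow]

lemma prod_one_add_neg_one_pow_card_fiber_of_not_surjective {k : ℕ} {f : Fin k → ι}
    (hf : ¬ Function.Surjective f) :
    ∏ j, (1 + (-1 : R) ^ (#{t | f t = j} + 1)) = 0 := by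
  obtain ⟨j, hj⟩ := not_forall.mp hf
  refine prod_eq_zero (mem_univ j) ?_
  rw [filter_false_of_mem fun t _ ht => hj ⟨t, ht⟩, card_empty]
  ring

lemma prod_one_add_neg_one_pow_card_fiber_of_bijective {k : ℕ} {f : Fin k → ι}
    (hf : Function.Bijective f) :
    ∏ j, (1 + (-1 : R) ^ (#{t | f t = j} + 1)) = 2 ^ Fintype.card ι := by
  have hfiber : ∀ j, #{t | f t = j} = 1 := fun j => by
    rw [card_eq_one]
    exact ⟨(Equiv.ofBijective f hf).symm j, by ext t; simp [Equiv.eq_symm_apply]⟩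
  simp_rw [hfiber]
  norm_num [prod_const]

theorem sum_signs_mul_sum_pow_of_lt (x : ι → R) {k : ℕ} (hk : k < Fintype.card ι) :
    ∑ ε : ι → ℤˣ, (∏ j, ((ε j : ℤ) : R)) * (∑ j, (ε j : ℤ) * x j) ^ k = 0 := by
  rw [sum_signs_mul_sum_pow]
  refine sum_eq_zero fun f _ => ?_
  have hf : ¬ Function.Surjective f := fun hs =>
    (Fintype.card_le_of_surjective f hs).not_gt (by simpa using hk)
  rw [prod_one_add_neg_one_pow_card_fiber_of_not_surjective hf, mul_zero]

theorem sum_signs_mul_sum_pow_card (x : ι → R) :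
    ∑ ε : ι → ℤˣ, (∏ j, ((ε j : ℤ) : R)) * (∑ j, (ε j : ℤ) * x j) ^ Fintype.card ι =
      2 ^ Fintype.card ι * (Fintype.card ι).factorial * ∏ j, x j := by
  set n := Fintype.card ι
  rw [sum_signs_mul_sum_pow]
  have hequiv :
      ∑ σ : Fin n ≃ ι, (∏ t, x (σ t)) * ∏ j, (1 + (-1 : R) ^ (#{t | σ t = j} + 1)) =
        ∑ f : Fin n → ι, (∏ t, x (f t)) * ∏ j, (1 + (-1) ^ (#{t | f t = j} + 1)) := by
    refine sum_of_injOn (⇑) DFunLike.coe_injective.injOn (fun _ _ => mem_univ _) ?_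
      (fun _ _ => rfl)
    intro f _ hf
    have hbij : ¬ Function.Bijective f := fun hb => hf ⟨Equiv.ofBijective f hb, by simp, rfl⟩
    have hs : ¬ Function.Surjective f := fun hs =>
      hbij ((Fintype.bijective_iff_surjective_and_card f).mpr ⟨hs, by simp [n]⟩)
    rw [prod_one_add_neg_one_pow_card_fiber_of_not_surjective hs, mul_zero]
  rw [← hequiv]
  simp_rw [Equiv.prod_comp,
    prod_one_add_neg_one_pow_card_fiber_of_bijective (Equiv.bijective _)]
  rw [sum_const, card_univ, Fintype.card_equiv (Fintype.equivFin ι).symm, Fintype.card_fin,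
    nsmul_eq_mul]
  ring

end SignedPowerSums

theorem exists_ensemble_exact_monomial_representation_general
    (d : ℕ) :
    ∃ (v : Fin (2 ^ d) → ℝ) (w : Fin (2 ^ d) → Fin d → ℝ),
      (∀ x : Fin d → ℝ,
        ∑ i, v i * (∑ j, w i j * x j) ^ d = ∏ j, x j) ∧
      (∀ k : ℕ, k < d → ∀ x : Fin d → ℝ,
        ∑ i, v i * (∑ j, w i j * x j) ^ k = 0) := by
  let e : (Fin d → ℤˣ) ≃ Fin (2 ^ d) := Fintype.equivFinOfCardEq (by simp)
  set C : ℝ := 2 ^ d * d.factorial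
  have hC : C ≠ 0 := by positivity
  have hreindex : ∀ (k : ℕ) (x : Fin d → ℝ),
      ∑ i, (∏ j, ((e.symm i j : ℤ) : ℝ)) / C * (∑ j, ((e.symm i j : ℤ) : ℝ) * x j) ^ k =
        (∑ ε : Fin d → ℤˣ, (∏ j, ((ε j : ℤ) : ℝ)) * (∑ j, (ε j : ℤ) * x j) ^ k) / C := by
    intro k x
    rw [e.symm.sum_comp (fun ε : Fin d → ℤˣ =>
      (∏ j, ((ε j : ℤ) : ℝ)) / C * (∑ j, ((ε j : ℤ) : ℝ) * x j) ^ k), sum_div]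
    simp_rw [div_mul_eq_mul_div]
  refine ⟨fun i => (∏ j, ((e.symm i j : ℤ) : ℝ)) / C, fun i j => e.symm i j, fun x => ?_,
    fun k hk x => ?_⟩
  · have h := sum_signs_mul_sum_pow_card x
    simp only [Fintype.card_fin] at h
    rw [hreindex, h]
    exact mul_div_cancel_left₀ _ hC
  · rw [hreindex, sum_signs_mul_sum_pow_of_lt x (by simpa using hk), zero_div]

/-- For every `d ≥ 1`, there exist `n = 2^d` real weights `v¹,…,vⁿ` and vectors
`w¹,…,wⁿ ∈ ℝ^d` such that, as an identity of functions on `ℝ^d`,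
`Σᵢ vⁱ ((wⁱ)ᵀx)^d = Π_j x_j` and `Σᵢ vⁱ ((wⁱ)ᵀx)^k = 0` for all `k < d`. -/
theorem exists_ensemble_exact_monomial_representation
    (d : ℕ) (hd : 1 ≤ d) :
    ∃ (v : Fin (2 ^ d) → ℝ) (w : Fin (2 ^ d) → Fin d → ℝ),
      (∀ x : Fin d → ℝ,
        ∑ i, v i * (∑ j, w i j * x j) ^ d = ∏ j, x j) ∧
      (∀ k : ℕ, k < d → ∀ x : Fin d → ℝ,
        ∑ i, v i * (∑ j, w i j * x j) ^ k = 0) :=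
  exists_ensemble_exact_monomial_representation_general d
end

section
/- Let d ≥ 1 and let f : ℝ → ℝ be d-times continuously differentiable on a neighborhood of 0, with a_d := f^{(d)}(0)/d! ≠ 0. Then for every x ∈ ℝ^d, the scaled single-layer ensemble of n = 2^d units given by F_h(x) = (2^d · d! · a_d · h^d)^{−1} · Σ_{S ⊆ {1,…,d}} (−1)^{|S|} · f(h · Σ_{j=1}^d s_j(S)·x_j) converges to Π_{j=1}^d x_j as h → 0 (h ≠ 0). In particular, the monomial Π_{j=1}^d x_j can be approximated to any desired accuracy ε > 0 by a one-layer ensemble model with 2^d unit models. -/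
/-!
Write `f = P + g`, where `P` is the Taylor polynomial of degree `d` at `0` and `g = o(t^d)`.
Summing over a new coordinate `x_i` replaces a polynomial `p` by `p(· + x_i) - p(· - x_i)`, which
lowers the degree by one and multiplies the coefficient of the top admissible degree by `2 x_i`
times that degree. Hence for `deg p ≤ d` the signed sum `∑_S (-1)^|S| p(∑_j s_j(S) x_j)` equals
`2^d d! (coeff_d p) ∏_j x_j`. Applied to `P` at the point `h x` this is `2^d d! a h^d ∏_j x_j`,
while the contribution of `g` is `o(h^d)`.
-/

open Filter Polynomial Finset Asymptotics Topology
open scoped Nat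

namespace Polynomial

variable {R : Type*} [CommRing R]

theorem eval_sub_eval_neg_of_natDegree_le_one {q : R[X]} (hq : q.natDegree ≤ 1) (r : R) :
    q.eval r - q.eval (-r) = 2 * r * q.coeff 1 := by
  rw [eq_X_add_C_of_natDegree_le_one hq]
  simp only [eval_add, eval_mul, eval_C, eval_X, coeff_add, coeff_C_mul_X, coeff_C, one_ne_zero,
    if_true, if_false]
  ring

theorem coeff_taylor_sub_taylor_neg {p : R[X]} {n m : ℕ} (hp : p.natDegree ≤ n + 1) (hm : n ≤ m)
    (r : R) : (taylor r p - taylor (-r) p).coeff m = 2 * r * ((m + 1) * p.coeff (m + 1)) := by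
  have hdeg : (hasseDeriv m p).natDegree ≤ 1 := (natDegree_hasseDeriv_le p m).trans (by omega)
  rw [coeff_sub, taylor_coeff, taylor_coeff, eval_sub_eval_neg_of_natDegree_le_one hdeg,
    hasseDeriv_coeff, add_comm 1 m, Nat.choose_succ_self_right, Nat.cast_succ]

theorem natDegree_taylor_sub_taylor_neg_le {p : R[X]} {n : ℕ} (hp : p.natDegree ≤ n + 1) (r : R) :
    (taylor r p - taylor (-r) p).natDegree ≤ n := by
  refine natDegree_le_iff_coeff_eq_zero.mpr fun m hm => ?_
  rw [coeff_taylor_sub_taylor_neg hp (Nat.lt_of_succ_le hm).le,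
    coeff_eq_zero_of_natDegree_lt (by omega), mul_zero, mul_zero]

theorem sum_powerset_neg_one_pow_mul_eval {ι : Type*} [DecidableEq ι] (x : ι → R) (T : Finset ι)
    (p : R[X]) (hp : p.natDegree ≤ #T) :
    ∑ S ∈ T.powerset, (-1) ^ #S * p.eval (∑ j ∈ T, (if j ∈ S then -1 else 1) * x j) =
      2 ^ #T * (#T).factorial * p.coeff #T * ∏ j ∈ T, x j := by
  induction T using Finset.induction_on generalizing p with
  | empty => simp [coeff_zero_eq_eval_zero]
  | insert i T hi ih =>
    rw [card_insert_of_notMem hi] at hp ⊢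
    set q := taylor (x i) p - taylor (-x i) p
    have hsplit : ∀ S ∈ T.powerset,
        (-1) ^ #S * p.eval (∑ j ∈ insert i T, (if j ∈ S then -1 else 1) * x j) +
          (-1) ^ #(insert i S) * p.eval (∑ j ∈ insert i T, (if j ∈ insert i S then -1 else 1) * x j)
        = (-1) ^ #S * q.eval (∑ j ∈ T, (if j ∈ S then -1 else 1) * x j) := by
      intro S hS
      have hiS : i ∉ S := fun h => hi (mem_powerset.mp hS h)
      have hT : ∑ j ∈ T, (if j ∈ insert i S then -1 else 1) * x j =
          ∑ j ∈ T, (if j ∈ S then -1 else 1) * x j :=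
        sum_congr rfl fun j hj => by simp only [mem_insert, ne_of_mem_of_not_mem hj hi, false_or]
      rw [sum_insert hi, sum_insert hi, hT, card_insert_of_notMem hiS, if_neg hiS,
        if_pos (mem_insert_self i S), one_mul, neg_one_mul, add_comm (x i), add_comm (-x i)]
      simp only [q, eval_sub, taylor_eval, pow_succ]
      ring
    rw [sum_powerset_insert hi, ← sum_add_distrib, sum_congr rfl hsplit,
      ih q (natDegree_taylor_sub_taylor_neg_le hp _), coeff_taylor_sub_taylor_neg hp le_rfl,
      prod_insert hi, Nat.factorial_succ]
    push_cast
    ring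

end Polynomial

theorem ContDiffAt.exists_polynomial_isLittleO {f : ℝ → ℝ} {n : ℕ} (hf : ContDiffAt ℝ n f 0) :
    ∃ P : ℝ[X], P.natDegree ≤ n ∧ P.coeff n = iteratedDeriv n f 0 / n ! ∧
      (fun t => f t - P.eval t) =o[𝓝 0] (· ^ n) := by
  obtain ⟨u, hu, hfu⟩ := hf.contDiffOn le_rfl (by simp)
  obtain ⟨ε, hε, hεu⟩ := Metric.mem_nhds_iff.mp hu
  have h0 : (0 : ℝ) ∈ Metric.ball 0 ε := Metric.mem_ball_self hε
  let P : ℝ[X] := ∑ k ∈ range (n + 1), C (iteratedDeriv k f 0 / k !) * X ^ k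
  have hP : ∀ t, taylorWithinEval f n (Metric.ball 0 ε) 0 t = P.eval t := fun t => by
    simp only [taylor_within_apply, iteratedDerivWithin_of_isOpen Metric.isOpen_ball h0, P,
      eval_finsetSum, eval_mul, eval_C, eval_pow, eval_X, sub_zero, smul_eq_mul]
    exact sum_congr rfl fun k _ => by ring
  refine ⟨P, natDegree_sum_le_of_forall_le _ _ fun k hk => ?_, ?_, ?_⟩
  · exact (natDegree_C_mul_X_pow_le _ k).trans (Nat.lt_succ_iff.mp (mem_range.mp hk))
  · simp [P]
  · have := taylor_isLittleO (convex_ball 0 ε) h0 (hfu.mono hεu)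
    rw [nhdsWithin_eq_nhds.mpr (Metric.isOpen_ball.mem_nhds h0)] at this
    simpa only [hP, sub_zero] using this

theorem Asymptotics.IsLittleO.comp_mul_const {g : ℝ → ℝ} {n : ℕ} (hg : g =o[𝓝 0] (· ^ n))
    (c : ℝ) : (fun h => g (h * c)) =o[𝓝 0] (· ^ n) := by
  have hc : Tendsto (· * c) (𝓝 (0 : ℝ)) (𝓝 0) := by
    simpa using (continuous_mul_const c).tendsto 0
  refine (hg.comp_tendsto hc).trans_isBigO ?_
  have hpow : (fun h : ℝ => (h * c) ^ n) = fun h => c ^ n * h ^ n := funext fun h => by ring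
  simpa only [Function.comp_def, hpow] using
    (isBigO_refl (· ^ n) (𝓝 (0 : ℝ))).const_mul_left (c ^ n)

theorem Asymptotics.IsLittleO.tendsto_inv_mul_pow_mul_add {R : ℝ → ℝ} {n : ℕ}
    (hR : R =o[𝓝 0] (· ^ n)) {c : ℝ} (hc : c ≠ 0) (L : ℝ) :
    Tendsto (fun h => (c * h ^ n)⁻¹ * (c * h ^ n * L + R h)) (𝓝[≠] 0) (𝓝 L) := by
  have hlim : Tendsto (fun h => L + c⁻¹ * (R h / h ^ n)) (𝓝[≠] 0) (𝓝 L) := by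
    simpa using tendsto_const_nhds.add
      (tendsto_const_nhds.mul (hR.tendsto_div_nhds_zero.mono_left nhdsWithin_le_nhds))
  refine hlim.congr' (eventually_nhdsWithin_of_forall fun h (hh : h ≠ 0) => ?_)
  field_simp

theorem scaled_ensemble_tendsto_monomial_general
    (d : ℕ) (f : ℝ → ℝ)
    (hf : ContDiffAt ℝ d f 0)
    (a : ℝ) (ha : a = iteratedDeriv d f 0 / d.factorial) (hane : a ≠ 0)
    (x : Fin d → ℝ) :
    Tendsto
      (fun h : ℝ =>
        (2 ^ d * (d.factorial : ℝ) * a * h ^ d)⁻¹ *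
          ∑ S : Finset (Fin d),
            (-1 : ℝ) ^ S.card *
              f (h * ∑ j, (if j ∈ S then (-1 : ℝ) else 1) * x j))
      (nhdsWithin 0 {(0 : ℝ)}ᶜ) (nhds (∏ j, x j)) ∧
    ∀ ε : ℝ, 0 < ε → ∃ h : ℝ, h ≠ 0 ∧
      |(2 ^ d * (d.factorial : ℝ) * a * h ^ d)⁻¹ *
          (∑ S : Finset (Fin d),
            (-1 : ℝ) ^ S.card *
              f (h * ∑ j, (if j ∈ S then (-1 : ℝ) else 1) * x j)) -
        ∏ j, x j| < ε := by
  obtain ⟨P, hPdeg, hPcoeff, hPo⟩ := hf.exists_polynomial_isLittleO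
  set y : Finset (Fin d) → ℝ := fun S => ∑ j, (if j ∈ S then (-1 : ℝ) else 1) * x j
  have hpoly (h : ℝ) : ∑ S : Finset (Fin d), (-1 : ℝ) ^ S.card * P.eval (h * y S) =
      2 ^ d * (d.factorial : ℝ) * a * h ^ d * ∏ j, x j := by
    have := sum_powerset_neg_one_pow_mul_eval (fun j => h * x j) univ P (by simpa using hPdeg)
    simp only [powerset_univ, card_univ, Fintype.card_fin, prod_mul_distrib, prod_const,
      mul_left_comm _ h] at this
    simp only [y, mul_sum, this, ← hPcoeff, ha]
    ring
  have hsum (h : ℝ) : ∑ S : Finset (Fin d), (-1 : ℝ) ^ S.card * f (h * y S) =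
      2 ^ d * (d.factorial : ℝ) * a * h ^ d * ∏ j, x j +
        ∑ S : Finset (Fin d), (-1 : ℝ) ^ S.card * (f (h * y S) - P.eval (h * y S)) := by
    simp only [← hpoly h, ← sum_add_distrib, ← mul_add, add_sub_cancel]
  have hrem : (fun h => ∑ S : Finset (Fin d), (-1 : ℝ) ^ S.card * (f (h * y S) - P.eval (h * y S)))
      =o[𝓝 0] (· ^ d) :=
    IsLittleO.fun_sum fun S _ => (hPo.comp_mul_const (y S)).const_mul_left _
  have hc : 2 ^ d * (d.factorial : ℝ) * a ≠ 0 := by positivity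
  have hmain : Tendsto (fun h => (2 ^ d * (d.factorial : ℝ) * a * h ^ d)⁻¹ *
      ∑ S : Finset (Fin d), (-1 : ℝ) ^ S.card * f (h * y S)) (𝓝[≠] 0) (𝓝 (∏ j, x j)) :=
    (hrem.tendsto_inv_mul_pow_mul_add hc _).congr fun h => by rw [hsum h]
  refine ⟨hmain, fun ε hε => ?_⟩
  obtain ⟨h, hlt, hne⟩ := ((Metric.tendsto_nhds.mp hmain ε hε).and self_mem_nhdsWithin).exists
  exact ⟨h, hne, by rwa [← Real.dist_eq]⟩

/-- Let `f : ℝ → ℝ` be `d`-times continuously differentiable near `0` with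
`a_d := f^{(d)}(0)/d! ≠ 0`. Then for every `x ∈ ℝ^d`, the scaled ensemble of
`2^d` units
`F_h(x) = (2^d · d! · a_d · h^d)⁻¹ · Σ_S (−1)^{|S|} f(h · Σ_j s_j(S) x_j)`
converges to `Π_j x_j` as `h → 0`, `h ≠ 0`. In particular, the monomial can be
approximated to any accuracy `ε > 0` by a one-layer ensemble with `2^d` units. -/
theorem scaled_ensemble_tendsto_monomial
    (d : ℕ) (hd : 1 ≤ d) (f : ℝ → ℝ)
    (hf : ContDiffAt ℝ d f 0)
    (a : ℝ) (ha : a = iteratedDeriv d f 0 / d.factorial) (hane : a ≠ 0)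
    (x : Fin d → ℝ) :
    Tendsto
      (fun h : ℝ =>
        (2 ^ d * (d.factorial : ℝ) * a * h ^ d)⁻¹ *
          ∑ S : Finset (Fin d),
            (-1 : ℝ) ^ S.card *
              f (h * ∑ j, (if j ∈ S then (-1 : ℝ) else 1) * x j))
      (nhdsWithin 0 {(0 : ℝ)}ᶜ) (nhds (∏ j, x j)) ∧
    ∀ ε : ℝ, 0 < ε → ∃ h : ℝ, h ≠ 0 ∧
      |(2 ^ d * (d.factorial : ℝ) * a * h ^ d)⁻¹ *
          (∑ S : Finset (Fin d),
            (-1 : ℝ) ^ S.card *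
              f (h * ∑ j, (if j ∈ S then (-1 : ℝ) else 1) * x j)) -
        ∏ j, x j| < ε :=
  scaled_ensemble_tendsto_monomial_general d f hf a ha hane x
end

section
/- Exactly 2^d unit models are necessary for exact single-layer representation of the monomial: if n ∈ ℕ, v¹, …, vⁿ ∈ ℝ and w¹, …, wⁿ ∈ ℝ^d satisfy, as identities in the polynomial ring ℝ[X₁,…,X_d], Σ_{i=1}^n vⁱ · (Σ_{j=1}^d wⁱ_j X_j)^d = X₁X₂⋯X_d and Σ_{i=1}^n vⁱ · (Σ_{j=1}^d wⁱ_j X_j)^k = 0 for every natural number k with k < d, then n ≥ 2^d. -/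
/-!
Comparing coefficients of the monomials of degree at most `d` shows that the moments
`m(s) = ∑ᵢ vⁱ ∏_{j ∈ s} wⁱ_j` of the multisets `s` of size at most `d` all vanish, except
`m({1, …, d}) ≠ 0`. For `S ⊆ {1, …, d}` let `u_S = (∏_{j ∈ S} wⁱ_j)ᵢ ∈ ℝⁿ`; the pairing
`⟨x, y⟩ = ∑ᵢ vⁱ xᵢ yᵢ` gives `⟨u_{Sᶜ}, u_{S'}⟩ = m(Sᶜ + S')`, which vanishes when `|S'| ≤ |S|`
and `S' ≠ S` but not when `S' = S`. This triangularity makes the `2^d` vectors `u_S` linearly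
independent in `ℝⁿ`.
-/

open MvPolynomial Finset

theorem linearIndependent_of_triangular_pairing {K M ι : Type*} [Field K] [AddCommGroup M]
    [Module K M] [Fintype ι] (u : ι → M) (f : ι → Module.Dual K M) (r : ι → ℕ)
    (hdiag : ∀ i, f i (u i) ≠ 0) (hoff : ∀ i j, r j ≤ r i → j ≠ i → f i (u j) = 0) :
    LinearIndependent K u := by
  classical
  rw [Fintype.linearIndependent_iff]
  intro g hg
  by_contra! hne
  obtain ⟨i, hi, hmax⟩ := (univ.filter (g · ≠ 0)).exists_max_image r
    (by simpa [Finset.filter_nonempty_iff] using hne)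
  have hpair : ∑ j, g j * f i (u j) = g i * f i (u i) := by
    refine sum_eq_single i (fun j _ hji => ?_) (by simp)
    by_cases hj : g j = 0
    · simp [hj]
    · rw [hoff i j (hmax j (by simpa using hj)) hji, mul_zero]
  have h := congrArg (f i) hg
  simp only [map_sum, map_smul, smul_eq_mul, map_zero, hpair] at h
  exact mul_ne_zero (by simpa using hi) (hdiag i) h

section DecidableEq

variable {σ : Type*} [DecidableEq σ]

theorem Multiset.toFinsupp_prod_pow_eq_prod_map {M : Type*} [CommMonoid M] (s : Multiset σ)
    (a : σ → M) : (Multiset.toFinsupp s).prod (fun j m => a j ^ m) = (s.map a).prod := by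
  rw [prod_multiset_map_count]
  rfl

theorem MvPolynomial.prod_map_X_eq_monomial_toFinsupp {K : Type*} [CommSemiring K]
    (s : Multiset σ) :
    (s.map (X : σ → MvPolynomial σ K)).prod = monomial (Multiset.toFinsupp s) 1 := by
  induction s using Multiset.induction_on with
  | empty => simp
  | cons a s ih =>
    rw [Multiset.map_cons, Multiset.prod_cons, ih, ← Multiset.singleton_add,
      Multiset.toFinsupp_add, Multiset.toFinsupp_singleton, X, monomial_mul, one_mul]

theorem Finset.compl_val_add_val [Fintype σ] (S : Finset σ) : Sᶜ.val + S.val = univ.val := by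
  rw [← union_compl S, ← disjUnion_eq_union _ _ disjoint_compl_right, add_comm]
  rfl

end DecidableEq

section Moments

variable {K σ ι : Type*} [Field K] [Fintype σ] [DecidableEq σ] [Fintype ι]

noncomputable def weightedPowerSum (v : ι → K) (w : ι → σ → K) (k : ℕ) : MvPolynomial σ K :=
  ∑ i, C (v i) * (∑ j, C (w i j) * X j) ^ k

def moment (v : ι → K) (w : ι → σ → K) (s : Multiset σ) : K :=
  ∑ i, v i * (s.map (w i)).prod

theorem coeff_toFinsupp_weightedPowerSum (v : ι → K) (w : ι → σ → K) (s : Multiset σ)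
    (k : ℕ) :
    coeff (Multiset.toFinsupp s) (weightedPowerSum v w k) =
      if Multiset.card s = k then s.countPerms * moment v w s else 0 := by
  simp only [weightedPowerSum, ← smul_eq_C_mul, coeff_sum, coeff_smul,
    coeff_linearCombination_X_pow_of_fintype]
  rw [show ((Multiset.toFinsupp s).sum fun _ m => m) = Multiset.card s from
    Multiset.toFinsupp_sum_eq s]
  split_ifs
  · simp only [Multiset.toFinsupp_prod_pow_eq_prod_map, moment, Multiset.countPerms,
      smul_eq_mul, mul_sum]
    exact sum_congr rfl fun i _ => by ring
  · simp

variable {v : ι → K} {w : ι → σ → K}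

theorem countPerms_mul_moment (hE1 : weightedPowerSum v w (Fintype.card σ) = ∏ j, X j)
    (hE2 : ∀ k < Fintype.card σ, weightedPowerSum v w k = 0)
    {s : Multiset σ} (hs : Multiset.card s ≤ Fintype.card σ) :
    s.countPerms * moment v w s = if s = univ.val then 1 else 0 := by
  rcases hs.lt_or_eq with hlt | heq
  · have h := congrArg (coeff (Multiset.toFinsupp s)) (hE2 _ hlt)
    rw [coeff_toFinsupp_weightedPowerSum, if_pos rfl, coeff_zero] at h
    rw [h, if_neg]
    rintro rfl
    exact hlt.ne (card_val _)
  · have h := congrArg (coeff (Multiset.toFinsupp s)) hE1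
    rw [coeff_toFinsupp_weightedPowerSum, if_pos heq, prod_eq_multiset_prod,
      prod_map_X_eq_monomial_toFinsupp, coeff_monomial] at h
    simpa [eq_comm] using h

variable [CharZero K]

theorem moment_univ_ne_zero (hE1 : weightedPowerSum v w (Fintype.card σ) = ∏ j, X j)
    (hE2 : ∀ k < Fintype.card σ, weightedPowerSum v w k = 0) :
    moment v w univ.val ≠ 0 := by
  intro h
  simpa [h] using countPerms_mul_moment hE1 hE2 (card_val univ).le

theorem moment_eq_zero (hE1 : weightedPowerSum v w (Fintype.card σ) = ∏ j, X j)
    (hE2 : ∀ k < Fintype.card σ, weightedPowerSum v w k = 0)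
    {s : Multiset σ} (hs : Multiset.card s ≤ Fintype.card σ) (hne : s ≠ univ.val) :
    moment v w s = 0 := by
  have h := countPerms_mul_moment hE1 hE2 hs
  rw [if_neg hne] at h
  exact (mul_eq_zero.mp h).resolve_left (Nat.cast_ne_zero.mpr (Nat.multinomial_pos _ _).ne')

theorem linearIndependent_prod_of_moments
    (hE1 : weightedPowerSum v w (Fintype.card σ) = ∏ j, X j)
    (hE2 : ∀ k < Fintype.card σ, weightedPowerSum v w k = 0) :
    LinearIndependent K fun (S : Finset σ) (i : ι) => ∏ j ∈ S, w i j := by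
  have hpair : ∀ S S' : Finset σ,
      Fintype.linearCombination K (fun i => v i * ∏ j ∈ Sᶜ, w i j) (fun i => ∏ j ∈ S', w i j) =
        moment v w (Sᶜ.val + S'.val) := by
    intro S S'
    simp only [Fintype.linearCombination_apply, moment, Multiset.map_add, Multiset.prod_add,
      ← prod_eq_multiset_prod, smul_eq_mul]
    exact sum_congr rfl fun i _ => by ring
  refine linearIndependent_of_triangular_pairing _
    (fun S => Fintype.linearCombination K fun i => v i * ∏ j ∈ Sᶜ, w i j) card
    (fun S => ?_) (fun S S' hle hne => ?_)
  · rw [hpair, compl_val_add_val]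
    exact moment_univ_ne_zero hE1 hE2
  · rw [hpair]
    refine moment_eq_zero hE1 hE2 ?_ fun h =>
      hne (val_inj.mp (add_left_cancel (h.trans (compl_val_add_val S).symm)))
    rw [Multiset.card_add, card_val, card_val, card_compl]
    have := S.card_le_univ
    omega

end Moments

theorem ensemble_monomial_representation_needs_two_pow_units_general
    (d : ℕ) (n : ℕ)
    (v : Fin n → ℝ) (w : Fin n → Fin d → ℝ)
    (hE1 : ∑ i, MvPolynomial.C (v i) *
        (∑ j, MvPolynomial.C (w i j) * MvPolynomial.X j) ^ d
      = ∏ j, (MvPolynomial.X j : MvPolynomial (Fin d) ℝ))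
    (hE2 : ∀ k : ℕ, k < d →
      ∑ i, MvPolynomial.C (v i) *
        (∑ j, MvPolynomial.C (w i j) * MvPolynomial.X j) ^ k
      = 0) :
    2 ^ d ≤ n := by
  have h1 : weightedPowerSum v w (Fintype.card (Fin d)) = ∏ j, X j := by
    rw [Fintype.card_fin]; exact hE1
  have h2 : ∀ k < Fintype.card (Fin d), weightedPowerSum v w k = 0 := by
    rw [Fintype.card_fin]; exact hE2
  simpa using (linearIndependent_prod_of_moments h1 h2).fintype_card_le_finrank

/-- Necessity of `2^d` unit models for exact single-layer representation of the
monomial: if, as identities in `ℝ[X₁,…,X_d]`,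
`Σᵢ vⁱ (Σ_j wⁱ_j X_j)^d = X₁⋯X_d` and `Σᵢ vⁱ (Σ_j wⁱ_j X_j)^k = 0` for all
`k < d`, then `n ≥ 2^d`. -/
theorem ensemble_monomial_representation_needs_two_pow_units
    (d : ℕ) (hd : 1 ≤ d) (n : ℕ)
    (v : Fin n → ℝ) (w : Fin n → Fin d → ℝ)
    (hE1 : ∑ i, MvPolynomial.C (v i) *
        (∑ j, MvPolynomial.C (w i j) * MvPolynomial.X j) ^ d
      = ∏ j, (MvPolynomial.X j : MvPolynomial (Fin d) ℝ))
    (hE2 : ∀ k : ℕ, k < d →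
      ∑ i, MvPolynomial.C (v i) *
        (∑ j, MvPolynomial.C (w i j) * MvPolynomial.X j) ^ k
      = 0) :
    2 ^ d ≤ n :=
  ensemble_monomial_representation_needs_two_pow_units_general d n v w hE1 hE2
end
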